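/- arXiv:2312.07809 — 3 statements merged into one kernel-verified Lean document; each statement's English description precedes it below -/
import Mathlib

section
/- Suppose ℓ = λ(α) parametrizes an invariant curve of the system ℓ' = −(ω/D)(α² + ℓ²) + (V/D)(α² + ℓ²)^{3/2} − 2α³ℓ − αℓ³, α' = −α⁴, with λ(0) = ω/V. Then the Taylor coefficients of λ at 0 satisfy λ'(0) = Dω/V², λ''(0)/2 = (2D²ω² − V⁴)/(2V³ω), and λ'''(0)/6 = D(D²ω² + V⁴)/(V⁴ω). -/
open Real Set Filter Topology

theorem sq_mul_hasDerivAt_aux {f : ℝ → ℝ} (hf : ContinuousAt f 0) :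
    HasDerivAt (fun x : ℝ => x ^ 2 * f x) 0 0 := by
  rw [hasDerivAt_iff_tendsto_slope]
  have h1 : Tendsto (fun y : ℝ => y * f y) (𝓝[≠] 0) (𝓝 0) := by
    have : Tendsto (fun y : ℝ => y * f y) (𝓝 0) (𝓝 (0 * f 0)) :=
      (continuousAt_id.mul hf)
    simpa using this.mono_left nhdsWithin_le_nhds
  refine h1.congr' ?_
  filter_upwards [self_mem_nhdsWithin] with y hy
  have hy' : (y : ℝ) ≠ 0 := hy
  rw [slope_def_field]
  field_simp
  ring

set_option maxHeartbeats 1000000 in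
/-- Taylor coefficients of the invariant curve ℓ = λ(α) at α = 0 with λ(0) = ω/V:
λ'(0) = Dω/V², λ''(0)/2 = (2D²ω² − V⁴)/(2V³ω), λ'''(0)/6 = D(D²ω² + V⁴)/(V⁴ω). -/
theorem invariant_curve_expansion (D V ω : ℝ) (hD : 0 < D) (hV : 0 < V) (hω : 0 < ω)
    (lam : ℝ → ℝ) (hreg : ContDiffAt ℝ 3 lam 0) (h0 : lam 0 = ω / V)
    (hinv : ∀ᶠ α in nhds (0 : ℝ),
      -(ω / D) * (α ^ 2 + (lam α) ^ 2)
        + (V / D) * (α ^ 2 + (lam α) ^ 2) ^ ((3 : ℝ) / 2)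
        - 2 * α ^ 3 * lam α - α * (lam α) ^ 3
      = deriv lam α * (-α ^ 4)) :
    deriv lam 0 = D * ω / V ^ 2 ∧
    deriv (deriv lam) 0 / 2 = (2 * D ^ 2 * ω ^ 2 - V ^ 4) / (2 * V ^ 3 * ω) ∧
    deriv (deriv (deriv lam)) 0 / 6 = D * (D ^ 2 * ω ^ 2 + V ^ 4) / (V ^ 4 * ω) := by
  obtain ⟨u, hu, hCu⟩ := hreg.contDiffOn le_rfl (by simp)
  set U : Set ℝ := interior u ∩ lam ⁻¹' Ioi 0 with hUdef
  have hCi : ContDiffOn ℝ 3 lam (interior u) := hCu.mono interior_subset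
  have hUopen : IsOpen U :=
    hCi.continuousOn.isOpen_inter_preimage isOpen_interior isOpen_Ioi
  have h0U : (0 : ℝ) ∈ U := by
    constructor
    · exact mem_interior_iff_mem_nhds.2 hu
    · simp only [mem_preimage, mem_Ioi, h0]; positivity
  have hUnhds : U ∈ 𝓝 (0 : ℝ) := hUopen.mem_nhds h0U
  have hC : ContDiffOn ℝ 3 lam U := hCi.mono inter_subset_left
  set l1 := deriv lam with hl1def
  set l2 := deriv l1 with hl2def
  set l3 := deriv l2 with hl3def
  have hC1 : ContDiffOn ℝ 2 l1 U := hC.deriv_of_isOpen hUopen (by norm_num)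
  have hC2 : ContDiffOn ℝ 1 l2 U := hC1.deriv_of_isOpen hUopen (by norm_num)
  have hl3c : ContinuousOn l3 U := hC2.continuousOn_deriv_of_isOpen hUopen le_rfl
  have hd1 : ∀ x ∈ U, HasDerivAt lam (l1 x) x := fun x hx =>
    ((hC.differentiableOn (by norm_num)).differentiableAt (hUopen.mem_nhds hx)).hasDerivAt
  have hd2 : ∀ x ∈ U, HasDerivAt l1 (l2 x) x := fun x hx =>
    ((hC1.differentiableOn (by norm_num)).differentiableAt (hUopen.mem_nhds hx)).hasDerivAt
  have hd3 : ∀ x ∈ U, HasDerivAt l2 (l3 x) x := fun x hx =>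
    ((hC2.differentiableOn (by norm_num)).differentiableAt (hUopen.mem_nhds hx)).hasDerivAt
  have hspos : ∀ x ∈ U, 0 < x ^ 2 + lam x ^ 2 := fun x hx => by
    have : (0:ℝ) < lam x := hx.2
    nlinarith [sq_nonneg x]
  -- basic functions
  set s : ℝ → ℝ := fun y => y ^ 2 + lam y ^ 2 with hsdef
  set ds : ℝ → ℝ := fun y => 2 * y + 2 * lam y * l1 y with hdsdef
  set dds : ℝ → ℝ := fun y => 2 + 2 * l1 y ^ 2 + 2 * lam y * l2 y with hddsdef
  have hsne : ∀ x ∈ U, s x ≠ 0 := fun x hx => by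
    simp only [hsdef]; exact (hspos x hx).ne'
  have hs' : ∀ x ∈ U, HasDerivAt s (ds x) x := fun x hx => by
    have h := (hasDerivAt_pow 2 x).add ((hd1 x hx).pow 2)
    have h : HasDerivAt s _ x := h
    convert h using 1
    simp only [hdsdef]; push_cast; ring
  have hds' : ∀ x ∈ U, HasDerivAt ds (dds x) x := fun x hx => by
    have h := ((hasDerivAt_id' x).const_mul 2).add
      (((hd1 x hx).const_mul 2).mul (hd2 x hx))
    have h : HasDerivAt ds _ x := h
    convert h using 1
    simp only [hddsdef]; ring
  -- the two sides of the identity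
  set G : ℝ → ℝ := fun α =>
    -(ω / D) * s α + (V / D) * s α ^ ((3 : ℝ) / 2)
      - 2 * α ^ 3 * lam α - α * lam α ^ 3 with hGdef
  set H : ℝ → ℝ := fun α => l1 α * (-α ^ 4) with hHdef
  have hGH : G =ᶠ[𝓝 0] H := by
    filter_upwards [hinv] with a ha
    simp only [hGdef, hHdef, hsdef]
    exact ha
  -- first derivatives
  set G1 : ℝ → ℝ := fun y =>
    -(ω / D) * ds y + (V / D) * ((3 : ℝ) / 2 * s y ^ ((1 : ℝ) / 2) * ds y)
      - 6 * y ^ 2 * lam y - 2 * y ^ 3 * l1 y - lam y ^ 3 - 3 * y * lam y ^ 2 * l1 y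
    with hG1def
  set H1 : ℝ → ℝ := fun y => l2 y * (-y ^ 4) + l1 y * (-(4 * y ^ 3)) with hH1def
  have hG1 : ∀ x ∈ U, HasDerivAt G (G1 x) x := fun x hx => by
    have h := ((((hs' x hx).const_mul (-(ω / D))).add
        (((hs' x hx).rpow_const (p := (3:ℝ)/2) (Or.inl (hsne x hx))).const_mul (V / D))).sub
        ((((hasDerivAt_pow 3 x)).const_mul 2).mul (hd1 x hx))).sub
        ((hasDerivAt_id' x).mul ((hd1 x hx).pow 3))
    have h : HasDerivAt G _ x := h
    rw [show (3 : ℝ) / 2 - 1 = (1 : ℝ) / 2 by norm_num] at h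
    convert h using 1
    all_goals simp only [hG1def, Pi.pow_apply]; push_cast; ring
  have hH1 : ∀ x ∈ U, HasDerivAt H (H1 x) x := fun x hx => by
    have h := (hd2 x hx).mul ((hasDerivAt_pow 4 x).neg)
    have h : HasDerivAt H _ x := h
    convert h using 1
    all_goals (simp only [hH1def, Pi.neg_apply]; push_cast; ring)
  -- second derivatives
  set G2 : ℝ → ℝ := fun y =>
    -(ω / D) * dds y
      + (V / D) * ((3 : ℝ) / 4 * s y ^ ((-1 : ℝ) / 2) * ds y ^ 2
        + (3 : ℝ) / 2 * s y ^ ((1 : ℝ) / 2) * dds y)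
      - 12 * y * lam y - 12 * y ^ 2 * l1 y - 2 * y ^ 3 * l2 y
      - 6 * lam y ^ 2 * l1 y - 6 * y * lam y * l1 y ^ 2 - 3 * y * lam y ^ 2 * l2 y
    with hG2def
  set H2 : ℝ → ℝ := fun y =>
    l3 y * (-y ^ 4) + l2 y * (-(4 * y ^ 3))
      + (l2 y * (-(4 * y ^ 3)) + l1 y * (-(12 * y ^ 2))) with hH2def
  have hG2 : ∀ x ∈ U, HasDerivAt G1 (G2 x) x := fun x hx => by
    have h := ((((((hds' x hx).const_mul (-(ω / D))).add
        (((((hs' x hx).rpow_const (p := (1:ℝ)/2) (Or.inl (hsne x hx))).const_mul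
          ((3:ℝ)/2)).mul (hds' x hx)).const_mul (V / D))).sub
        (((hasDerivAt_pow 2 x).const_mul 6).mul (hd1 x hx))).sub
        (((hasDerivAt_pow 3 x).const_mul 2).mul (hd2 x hx))).sub
        ((hd1 x hx).pow 3)).sub
        ((((hasDerivAt_id' x).const_mul 3).mul ((hd1 x hx).pow 2)).mul (hd2 x hx))
    have h : HasDerivAt G1 _ x := h
    rw [show (1 : ℝ) / 2 - 1 = (-1 : ℝ) / 2 by norm_num] at h
    convert h using 1
    all_goals (simp only [hG2def, Pi.mul_apply, Pi.pow_apply]; push_cast; ring)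
  have hH2 : ∀ x ∈ U, HasDerivAt H1 (H2 x) x := fun x hx => by
    have h := ((hd3 x hx).mul ((hasDerivAt_pow 4 x).neg)).add
      ((hd2 x hx).mul ((((hasDerivAt_pow 3 x).const_mul 4)).neg))
    have h : HasDerivAt H1 _ x := h
    convert h using 1
    all_goals (simp only [hH2def, Pi.neg_apply]; push_cast; ring)
  -- eventual equalities
  have hG1e : deriv G =ᶠ[𝓝 0] G1 := by
    filter_upwards [hUnhds] with x hx using (hG1 x hx).deriv
  have hH1e : deriv H =ᶠ[𝓝 0] H1 := by
    filter_upwards [hUnhds] with x hx using (hH1 x hx).deriv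
  have hE1 : G1 =ᶠ[𝓝 0] H1 := hG1e.symm.trans ((hGH.deriv).trans hH1e)
  have hG2e : deriv G1 =ᶠ[𝓝 0] G2 := by
    filter_upwards [hUnhds] with x hx using (hG2 x hx).deriv
  have hH2e : deriv H1 =ᶠ[𝓝 0] H2 := by
    filter_upwards [hUnhds] with x hx using (hH2 x hx).deriv
  have hE2 : G2 =ᶠ[𝓝 0] H2 := hG2e.symm.trans ((hE1.deriv).trans hH2e)
  -- third derivative of both sides at 0
  set d3 : ℝ := 6 * l1 0 * l2 0 + 2 * lam 0 * l3 0 with hd3def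
  have hdds0 : HasDerivAt dds d3 0 := by
    have h := ((hasDerivAt_const (0:ℝ) (2:ℝ)).add
      (((hd2 0 h0U).pow 2).const_mul 2)).add
      (((hd1 0 h0U).const_mul 2).mul (hd3 0 h0U))
    have h : HasDerivAt dds _ 0 := h
    convert h using 1
    all_goals (simp only [hd3def]; push_cast; ring)
  set g3v : ℝ := -(ω / D) * d3
      + (V / D) * ((-3 : ℝ) / 8 * s 0 ^ ((-3 : ℝ) / 2) * ds 0 ^ 3
        + (9 : ℝ) / 4 * s 0 ^ ((-1 : ℝ) / 2) * ds 0 * dds 0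
        + (3 : ℝ) / 2 * s 0 ^ ((1 : ℝ) / 2) * d3)
      - (12 * lam 0 + 18 * lam 0 * l1 0 ^ 2 + 9 * lam 0 ^ 2 * l2 0) with hg3vdef
  have hG3 : HasDerivAt G2 g3v 0 := by
    have t1 := hdds0.const_mul (-(ω / D))
    have t2 := (((hs' 0 h0U).rpow_const (p := (-1:ℝ)/2) (Or.inl (hsne 0 h0U))).const_mul
      ((3:ℝ)/4)).mul ((hds' 0 h0U).pow 2)
    have t3 := (((hs' 0 h0U).rpow_const (p := (1:ℝ)/2) (Or.inl (hsne 0 h0U))).const_mul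
      ((3:ℝ)/2)).mul hdds0
    have t4 := (t2.add t3).const_mul (V / D)
    have t5 := ((hasDerivAt_id' (0:ℝ)).const_mul 12).mul (hd1 0 h0U)
    have t6 := ((hasDerivAt_pow 2 (0:ℝ)).const_mul 12).mul (hd2 0 h0U)
    have t7 := ((hasDerivAt_pow 3 (0:ℝ)).const_mul 2).mul (hd3 0 h0U)
    have t8 := (((hd1 0 h0U).pow 2).const_mul 6).mul (hd2 0 h0U)
    have t9 := (((hasDerivAt_id' (0:ℝ)).const_mul 6).mul (hd1 0 h0U)).mul ((hd2 0 h0U).pow 2)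
    have t10 := (((hasDerivAt_id' (0:ℝ)).const_mul 3).mul ((hd1 0 h0U).pow 2)).mul (hd3 0 h0U)
    have h := ((((((t1.add t4).sub t5).sub t6).sub t7).sub t8).sub t9).sub t10
    have h : HasDerivAt G2 _ 0 := h
    rw [show (-1 : ℝ) / 2 - 1 = (-3 : ℝ) / 2 by norm_num,
        show (1 : ℝ) / 2 - 1 = (-1 : ℝ) / 2 by norm_num] at h
    convert h using 1
    all_goals (simp only [hg3vdef, hd3def]; push_cast; norm_num; ring)
  have hH3 : HasDerivAt H2 0 0 := by
    have hW : ContinuousAt (fun y =>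
        l3 y * (-y ^ 2) + l2 y * (-(4 * y)) + (l2 y * (-(4 * y)) + l1 y * (-12))) 0 := by
      have hl3a : ContinuousAt l3 0 := (hl3c 0 h0U).continuousAt hUnhds
      have hl2a : ContinuousAt l2 0 := (hd3 0 h0U).continuousAt
      have hl1a : ContinuousAt l1 0 := (hd2 0 h0U).continuousAt
      fun_prop
    have h := sq_mul_hasDerivAt_aux hW
    apply h.congr_of_eventuallyEq
    refine Eventually.of_forall fun y => ?_
    simp only [hH2def]; ring
  have hG3' : HasDerivAt H2 g3v 0 := hG3.congr_of_eventuallyEq hE2.symm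
  -- the three equations
  have E1 : G1 0 = H1 0 := hE1.eq_of_nhds
  have E2 : G2 0 = H2 0 := hE2.eq_of_nhds
  have E3 : g3v = 0 := hG3'.unique hH3
  -- rpow simplifications
  have hc0 : (0:ℝ) < ω / V := by positivity
  have hs0 : s 0 = (ω / V) ^ 2 := by simp [hsdef, h0]
  have hrpow : ∀ k : ℝ, s 0 ^ (k : ℝ) = (ω / V) ^ (2 * k) := fun k => by
    rw [hs0, ← Real.rpow_natCast (ω / V) 2, ← Real.rpow_mul hc0.le]
    norm_num
  have hp1 : s 0 ^ ((1 : ℝ) / 2) = ω / V := by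
    rw [hrpow, show (2:ℝ) * (1 / 2) = (1:ℝ) by norm_num]
    exact Real.rpow_one _
  have hpm1 : s 0 ^ ((-1 : ℝ) / 2) = (ω / V)⁻¹ := by
    rw [hrpow, show (2:ℝ) * (-1 / 2) = (-1:ℝ) by norm_num]
    exact Real.rpow_neg_one _
  have hpm3 : s 0 ^ ((-3 : ℝ) / 2) = ((ω / V) ^ 3)⁻¹ := by
    rw [hrpow, show (2:ℝ) * (-3 / 2) = ((-3 : ℤ) : ℝ) by norm_num, Real.rpow_intCast,
      zpow_neg]
    norm_cast
  -- turn the equations into polynomial equations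
  have hVne : V ≠ 0 := hV.ne'
  have hωne : ω ≠ 0 := hω.ne'
  have hDne : D ≠ 0 := hD.ne'
  simp only [hG1def, hH1def, hdsdef, hp1, h0] at E1
  norm_num at E1
  simp only [hG2def, hH2def, hdsdef, hddsdef, hp1, hpm1, h0] at E2
  norm_num at E2
  simp only [hg3vdef, hd3def, hdsdef, hddsdef, hp1, hpm1, hpm3, h0] at E3
  norm_num at E3
  -- solve: clear denominators and extract the Taylor coefficients
  field_simp at E1 E2 E3
  have p1 : l1 0 * V ^ 2 = D * ω := by
    have key : (2*D*V^3*ω^2) * (l1 0 * V ^ 2) = (2*D*V^3*ω^2) * (D * ω) := by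
      linear_combination (2*D*V^3) * E1
    exact mul_left_cancel₀ (by positivity) key
  have p2 : l2 0 * (V ^ 3 * ω) = 2 * D ^ 2 * ω ^ 2 - V ^ 4 := by
    have key : (8*D*V^3*ω^2) * (l2 0 * (V ^ 3 * ω))
        = (8*D*V^3*ω^2) * (2 * D ^ 2 * ω ^ 2 - V ^ 4) := by
      linear_combination (2*D*V^5*ω) * E2 - 8*D*V^3*ω^2*(4*V^2*l1 0 - 2*D*ω) * p1
    exact mul_left_cancel₀ (by positivity) key
  have p3 : l3 0 * (V ^ 4 * ω) = 6 * D * (D ^ 2 * ω ^ 2 + V ^ 4) := by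
    have key : (64*D*V^6*ω^5) * (l3 0 * (V ^ 4 * ω))
        = (64*D*V^6*ω^5) * (6 * D * (D ^ 2 * ω ^ 2 + V ^ 4)) := by
      linear_combination (D*V^9*ω^4) * E3
        + (-384*D*V^10*ω^4*(l1 0)^2 + 768*D^2*V^8*ω^5*(l1 0) + 192*D*V^10*ω^4
            - 768*D^3*V^6*ω^6) * p1
        + (-768*D*V^8*ω^4*(l1 0) + 576*D^2*V^6*ω^5) * p2
    exact mul_left_cancel₀ (by positivity) key
  refine ⟨?_, ?_, ?_⟩
  · rw [eq_div_iff (pow_ne_zero 2 hVne)]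
    exact p1
  · rw [div_eq_div_iff (by norm_num) (by positivity)]
    linear_combination 2 * p2
  · rw [div_eq_div_iff (by norm_num) (by positivity)]
    linear_combination p3
end

section
/- As ω → 0⁺, the slope of the vector field ℓ' = −ω(α² + ℓ²) + (α² + ℓ²)^{3/2} − 2α³ℓ − αℓ³, α' = −α⁴ along the line segment ℓ = 2ω(1 − α/(4ω)) converges, for each fixed α > 0, to −5^{3/2}/(8α) − 9/8, which is strictly less than −1/2. -/
/-!
For `ω ≠ 0` the line is `ℓ = 2ω - α/2`, and the vector field is continuous in `(ω, ℓ)`, so the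
limit of the slope is its value at `ω = 0`, `ℓ = -α/2`. There `α² + ℓ² = 5α²/4`, whose
`3/2`-power is `5^{3/2} α³ / 8`.
-/

open Real Set Filter Topology

noncomputable def spiralL (ω ℓ α : ℝ) : ℝ :=
  -ω * (α ^ 2 + ℓ ^ 2) + (α ^ 2 + ℓ ^ 2) ^ ((3 : ℝ) / 2) - 2 * α ^ 3 * ℓ - α * ℓ ^ 3

noncomputable def spiralA (α : ℝ) : ℝ := -α ^ 4

lemma sq_rpow_three_halves {a : ℝ} (ha : 0 ≤ a) : (a ^ 2) ^ ((3 : ℝ) / 2) = a ^ 3 := by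
  rw [← Real.rpow_natCast_mul ha]
  norm_num

lemma mul_sq_rpow_three_halves {c a : ℝ} (hc : 0 ≤ c) (ha : 0 ≤ a) :
    (c * a ^ 2) ^ ((3 : ℝ) / 2) = c ^ ((3 : ℝ) / 2) * a ^ 3 := by
  rw [Real.mul_rpow hc (sq_nonneg a), sq_rpow_three_halves ha]

lemma continuous_spiralL (α : ℝ) : Continuous fun p : ℝ × ℝ => spiralL p.1 p.2 α := by
  have hpow : Continuous fun x : ℝ => x ^ ((3 : ℝ) / 2) := Real.continuous_rpow_const (by norm_num)
  unfold spiralL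
  fun_prop

lemma spiralL_zero_neg_half {α : ℝ} (hα : 0 ≤ α) :
    spiralL 0 (-(α / 2)) α = 5 ^ ((3 : ℝ) / 2) / 8 * α ^ 3 + 9 / 8 * α ^ 4 := by
  have hsum : α ^ 2 + (-(α / 2)) ^ 2 = 5 / 4 * α ^ 2 := by ring
  have hquarter : ((5 : ℝ) / 4) ^ ((3 : ℝ) / 2) = 5 ^ ((3 : ℝ) / 2) / 8 := by
    rw [Real.div_rpow (by norm_num) (by norm_num),
      show (4 : ℝ) = 2 ^ 2 by norm_num, sq_rpow_three_halves (by norm_num)]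
    norm_num
  rw [spiralL, hsum, mul_sq_rpow_three_halves (by norm_num) hα, hquarter]
  ring

lemma line_eq_sub {ω : ℝ} (hω : ω ≠ 0) (α : ℝ) : 2 * ω * (1 - α / (4 * ω)) = 2 * ω - α / 2 := by
  field_simp
  ring

/-- As ω → 0⁺, the slope of the vector field along the line ℓ = 2ω(1 − α/(4ω)) = 2ω − α/2
converges, for each fixed α > 0, to −5^{3/2}/(8α) − 9/8 < −1/2. -/
theorem slope_limit_on_line (α : ℝ) (hα : 0 < α) :
    Tendsto (fun ω : ℝ => spiralL ω (2 * ω * (1 - α / (4 * ω))) α / spiralA α)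
      (nhdsWithin 0 (Set.Ioi 0))
      (nhds (-(5 : ℝ) ^ ((3 : ℝ) / 2) / (8 * α) - 9 / 8)) ∧
    -(5 : ℝ) ^ ((3 : ℝ) / 2) / (8 * α) - 9 / 8 < -(1 / 2) := by
  have hlimit : spiralL 0 (2 * 0 - α / 2) α / spiralA α
      = -(5 : ℝ) ^ ((3 : ℝ) / 2) / (8 * α) - 9 / 8 := by
    rw [show (2 : ℝ) * 0 - α / 2 = -(α / 2) by ring, spiralL_zero_neg_half hα.le, spiralA]
    field_simp
    ring
  have hcont : Continuous fun ω : ℝ => spiralL ω (2 * ω - α / 2) α / spiralA α :=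
    ((continuous_spiralL α).comp
      (continuous_id.prodMk (by fun_prop : Continuous fun ω : ℝ => 2 * ω - α / 2))).div_const _
  refine ⟨?_, ?_⟩
  · have hline : Tendsto (fun ω : ℝ => spiralL ω (2 * ω - α / 2) α / spiralA α)
        (𝓝[>] 0) (𝓝 (-(5 : ℝ) ^ ((3 : ℝ) / 2) / (8 * α) - 9 / 8)) :=
      hlimit ▸ (hcont.tendsto 0).mono_left nhdsWithin_le_nhds
    refine hline.congr' ?_
    filter_upwards [self_mem_nhdsWithin] with ω hω
    rw [line_eq_sub (ne_of_gt hω)]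
  · have hpos : 0 < (5 : ℝ) ^ ((3 : ℝ) / 2) / (8 * α) := by positivity
    rw [neg_div]
    linarith
end

section
/- Let ω > 0 and V = D = 1. If ω is sufficiently small then the region A_ω = {(α,ℓ) : ℓ > 2ω(1 − α/(4ω)), α > 0, ℓ > 0} is forward invariant for the flow of ℓ' = −ω(α² + ℓ²) + (α² + ℓ²)^{3/2} − 2α³ℓ − αℓ³, α' = −α⁴. -/
open Real Set Filter Topology

/-- The region A_ω = {(α,ℓ) : ℓ > 2ω(1 − α/(4ω)), α > 0, ℓ > 0}. -/
def regionA (ω : ℝ) : Set (ℝ × ℝ) :=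
  {p : ℝ × ℝ | p.2 > 2 * ω * (1 - p.1 / (4 * ω)) ∧ 0 < p.1 ∧ 0 < p.2}

set_option maxHeartbeats 1000000

lemma rpow_three_halves (s : ℝ) (hs : 0 ≤ s) : s ^ ((3:ℝ)/2) = s * Real.sqrt s := by
  rcases eq_or_lt_of_le hs with h | h
  · simp [← h, Real.zero_rpow (by norm_num : (3:ℝ)/2 ≠ 0)]
  · rw [show (3:ℝ)/2 = 1 + 1/2 by norm_num, Real.rpow_add h, Real.rpow_one,
      ← Real.sqrt_eq_rpow]

lemma deriv_nonpos_of_left_pos {f : ℝ → ℝ} {d t : ℝ} (ht : 0 < t)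
    (hd : HasDerivAt f d t) (h0 : f t = 0) (hpos : ∀ τ ∈ Set.Ico (0:ℝ) t, 0 < f τ) :
    d ≤ 0 := by
  have hd' : HasDerivWithinAt f d (Iio t) t := hd.hasDerivWithinAt
  rw [hasDerivWithinAt_iff_tendsto_slope' (notMem_Iio.2 le_rfl)] at hd'
  refine le_of_tendsto hd' ?_
  filter_upwards [Ioo_mem_nhdsLT_of_mem (show t ∈ Ioc (0:ℝ) t from ⟨ht, le_rfl⟩)]
    with τ hτ
  have hfτ : 0 < f τ := hpos τ ⟨le_of_lt hτ.1, hτ.2⟩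
  have : slope f t τ = f τ / (τ - t) := by
    simp [slope_def_field, h0, div_eq_iff (sub_ne_zero.2 (ne_of_lt hτ.2))]
  rw [this]
  exact le_of_lt (div_neg_of_pos_of_neg hfτ (by linarith [hτ.2]))

lemma left_limit_nonneg {f : ℝ → ℝ} {t : ℝ} (ht : 0 < t)
    (hc : ContinuousAt f t) (hpos : ∀ τ ∈ Set.Ico (0:ℝ) t, 0 < f τ) : 0 ≤ f t := by
  have h1 : Tendsto f (𝓝[<] t) (𝓝 (f t)) := hc.tendsto.mono_left nhdsWithin_le_nhds
  refine ge_of_tendsto h1 ?_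
  filter_upwards [Ioo_mem_nhdsLT_of_mem (show t ∈ Ioc (0:ℝ) t from ⟨ht, le_rfl⟩)]
    with τ hτ
  exact le_of_lt (hpos τ ⟨le_of_lt hτ.1, hτ.2⟩)

lemma key_line (ω a l : ℝ) (hω : 0 < ω) (hω' : ω < 1/1000) (ha : 0 < a) (hl : 0 < l)
    (hline : l + a/2 - 2*ω = 0) : 0 < spiralL ω l a + spiralA a / 2 := by
  have hs : (0:ℝ) ≤ a^2 + l^2 := by positivity
  have ha4 : a < 4*ω := by linarith
  have hl2 : l < 2*ω := by linarith
  have hsge : 16/5 * ω^2 ≤ a^2 + l^2 := by nlinarith [sq_nonneg (a - l/2)]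
  have hsqrt : 16*ω/9 ≤ Real.sqrt (a^2 + l^2) := by
    rw [Real.le_sqrt (by positivity) (by positivity)]
    nlinarith
  have hmul : (a^2+l^2) * (16*ω/9) ≤ (a^2+l^2) * Real.sqrt (a^2+l^2) :=
    mul_le_mul_of_nonneg_left hsqrt hs
  have h7 : (16/5*ω^2) * (7*ω/9) ≤ (a^2+l^2) * (7*ω/9) :=
    mul_le_mul_of_nonneg_right hsge (by positivity)
  have ha2 : a^2 < 16*ω^2 := by nlinarith
  have hl22 : l^2 < 4*ω^2 := by nlinarith
  have ha3 : a^3 < 64*ω^3 := by nlinarith [mul_lt_mul_of_pos_left ha2 ha]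
  have hl3 : l^3 < 8*ω^3 := by nlinarith [mul_lt_mul_of_pos_left hl22 hl]
  have hb1 : a^3*l < 128*ω^4 := by
    nlinarith [mul_lt_mul_of_pos_right ha3 hl,
      mul_lt_mul_of_pos_left hl2 (show (0:ℝ) < 64*ω^3 by positivity)]
  have hb2 : a*l^3 < 32*ω^4 := by
    nlinarith [mul_lt_mul_of_pos_left hl3 ha,
      mul_lt_mul_of_pos_right ha4 (show (0:ℝ) < 8*ω^3 by positivity)]
  have hb3 : a^4 < 256*ω^4 := by
    nlinarith [mul_lt_mul_of_pos_left ha3 ha,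
      mul_lt_mul_of_pos_right ha4 (show (0:ℝ) < 64*ω^3 by positivity)]
  have hω4 : ω^4 < 1/1000 * ω^3 := by
    nlinarith [mul_lt_mul_of_pos_right hω' (pow_pos hω 3)]
  rw [spiralL, spiralA, rpow_three_halves _ hs]
  nlinarith [hmul, h7]

lemma key_axis (ω a : ℝ) (hω : 0 < ω) (ha : 4*ω ≤ a) : 0 < spiralL ω 0 a := by
  have ha0 : 0 < a := by linarith
  have : ((a:ℝ)^2 + 0^2) ^ ((3:ℝ)/2) = a^3 := by
    rw [rpow_three_halves _ (by positivity)]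
    simp [Real.sqrt_sq ha0.le]
    ring
  rw [spiralL, this]
  nlinarith [mul_pos (mul_pos ha0 ha0) (show 0 < a - ω by linarith)]

lemma alpha_ne_zero (u : ℝ → ℝ) (t0 : ℝ) (ht0 : 0 < t0)
    (hd : ∀ τ ∈ Set.Icc (0:ℝ) t0, HasDerivAt u (spiralA (u τ)) τ)
    (hpos : ∀ τ ∈ Set.Ico (0:ℝ) t0, 0 < u τ)
    (hz : u t0 = 0) : False := by
  have hu0 : 0 < u 0 := hpos 0 ⟨le_rfl, ht0⟩
  set C : ℝ := (u 0 ^ 3)⁻¹ + 3 * t0 with hC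
  have hCpos : 0 < C := by positivity
  have key : ∀ σ ∈ Set.Ico (0:ℝ) t0, (u σ ^ 3)⁻¹ = (u 0 ^ 3)⁻¹ + 3 * σ := by
    intro σ hσ
    set φ : ℝ → ℝ := fun τ => (u τ ^ 3)⁻¹ - 3 * τ with hφ
    have hcont : ContinuousOn φ (Set.Icc 0 σ) := by
      intro τ hτ
      have hτ' : τ ∈ Set.Ico (0:ℝ) t0 := ⟨hτ.1, lt_of_le_of_lt hτ.2 hσ.2⟩
      have hne : u τ ^ 3 ≠ 0 := by
        have := hpos τ hτ'
        positivity
      have hc : ContinuousAt u τ := (hd τ ⟨hτ.1, le_of_lt hτ'.2⟩).continuousAt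
      exact (((hc.pow 3).inv₀ hne).sub
        (continuousAt_const.mul continuousAt_id)).continuousWithinAt
    have hderiv : ∀ τ ∈ Set.Ico (0:ℝ) σ, HasDerivWithinAt φ 0 (Set.Ici τ) τ := by
      intro τ hτ
      have hτ' : τ ∈ Set.Ico (0:ℝ) t0 := ⟨hτ.1, lt_trans hτ.2 hσ.2⟩
      have hupos := hpos τ hτ'
      have hne : u τ ^ 3 ≠ 0 := by positivity
      have h1 : HasDerivAt (fun τ => u τ ^ 3) (3 * u τ ^ 2 * spiralA (u τ)) τ := by
        have := (hd τ ⟨hτ.1, le_of_lt hτ'.2⟩).pow 3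
        exact this.congr_deriv (by norm_num)
      have h2 : HasDerivAt (fun τ => (u τ ^ 3)⁻¹)
          (-(3 * u τ ^ 2 * spiralA (u τ)) / (u τ ^ 3) ^ 2) τ := h1.inv hne
      have h3 : HasDerivAt φ (-(3 * u τ ^ 2 * spiralA (u τ)) / (u τ ^ 3) ^ 2 - 3) τ :=
        h2.sub (by simpa using (hasDerivAt_id τ).const_mul (3:ℝ))
      have hval : -(3 * u τ ^ 2 * spiralA (u τ)) / (u τ ^ 3) ^ 2 - 3 = 0 := by
        rw [spiralA]
        field_simp
        ring
      rw [hval] at h3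
      exact h3.hasDerivWithinAt
    have := constant_of_has_deriv_right_zero hcont hderiv σ ⟨hσ.1, le_rfl⟩
    simp only [hφ] at this
    linarith [this]
  have hbound : ∀ σ ∈ Set.Ico (0:ℝ) t0, C⁻¹ ≤ u σ ^ 3 := by
    intro σ hσ
    have h1 : (u σ ^ 3)⁻¹ ≤ C := by
      rw [key σ hσ, hC]; linarith [hσ.2]
    have hup : 0 < u σ ^ 3 := by
      have := hpos σ hσ; positivity
    calc C⁻¹ ≤ ((u σ ^ 3)⁻¹)⁻¹ := by
          exact inv_anti₀ (by positivity) h1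
      _ = u σ ^ 3 := inv_inv _
  have hc : ContinuousAt (fun τ => u τ ^ 3) t0 :=
    ((hd t0 ⟨le_of_lt ht0, le_rfl⟩).continuousAt).pow 3
  have hlim : Tendsto (fun τ => u τ ^ 3) (𝓝[<] t0) (𝓝 (u t0 ^ 3)) :=
    hc.tendsto.mono_left nhdsWithin_le_nhds
  have : C⁻¹ ≤ u t0 ^ 3 := by
    refine ge_of_tendsto hlim ?_
    filter_upwards [Ioo_mem_nhdsLT_of_mem (show t0 ∈ Set.Ioc (0:ℝ) t0 from ⟨ht0, le_rfl⟩)]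
      with τ hτ
    exact hbound τ ⟨le_of_lt hτ.1, hτ.2⟩
  rw [hz] at this
  have hCi : (0:ℝ) < C⁻¹ := by positivity
  norm_num at this
  linarith

/-- For ω > 0 sufficiently small (V = D = 1), the region A_ω is forward invariant:
every solution starting in A_ω stays in A_ω for all positive times in its interval of
existence. -/
theorem Aomega_forward_invariant :
    ∃ ω₀ > (0 : ℝ), ∀ ω : ℝ, 0 < ω → ω < ω₀ →
      ∀ (T : ℝ) (ℓ α : ℝ → ℝ), 0 < T →
        (∀ τ ∈ Set.Ico (0 : ℝ) T, HasDerivAt ℓ (spiralL ω (ℓ τ) (α τ)) τ) →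
        (∀ τ ∈ Set.Ico (0 : ℝ) T, HasDerivAt α (spiralA (α τ)) τ) →
        (α 0, ℓ 0) ∈ regionA ω →
        ∀ τ ∈ Set.Ico (0 : ℝ) T, (α τ, ℓ τ) ∈ regionA ω := by
  refine ⟨1/1000, by norm_num, ?_⟩
  intro ω hω hω' T ℓ α hT hℓd hαd hinit τ1 hτ1
  by_contra hbad
  set g : ℝ → ℝ := fun t => ℓ t + α t / 2 - 2*ω with hgdef
  have hmem : ∀ t : ℝ, (α t, ℓ t) ∈ regionA ω ↔ (0 < g t ∧ 0 < α t ∧ 0 < ℓ t) := by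
    intro t
    have hrw : 2*ω*(1 - α t/(4*ω)) = 2*ω - α t/2 := by
      field_simp
      ring
    simp only [regionA, Set.mem_setOf_eq, hrw, hgdef]
    constructor
    · rintro ⟨h1, h2, h3⟩; exact ⟨by linarith, h2, h3⟩
    · rintro ⟨h1, h2, h3⟩; exact ⟨by linarith, h2, h3⟩
  have hinit' := (hmem 0).1 hinit
  set B := {t : ℝ | t ∈ Set.Icc 0 τ1 ∧ (g t ≤ 0 ∨ α t ≤ 0 ∨ ℓ t ≤ 0)} with hBdef
  have hτ1B : τ1 ∈ B := by
    refine ⟨⟨hτ1.1, le_rfl⟩, ?_⟩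
    by_contra h
    push_neg at h
    exact (hbad ((hmem τ1).2 h))
  have hBne : B.Nonempty := ⟨τ1, hτ1B⟩
  have hBbd : BddBelow B := ⟨0, fun t ht => ht.1.1⟩
  set t0 := sInf B with ht0def
  have ht0_mem_Icc : t0 ∈ Set.Icc 0 τ1 :=
    ⟨le_csInf hBne (fun t ht => ht.1.1), csInf_le hBbd hτ1B⟩
  have hIco : ∀ σ ∈ Set.Icc (0:ℝ) t0, σ ∈ Set.Ico (0:ℝ) T := fun σ hσ =>
    ⟨hσ.1, lt_of_le_of_lt (le_trans hσ.2 ht0_mem_Icc.2) hτ1.2⟩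
  have hgd : ∀ t ∈ Set.Ico (0:ℝ) T,
      HasDerivAt g (spiralL ω (ℓ t) (α t) + spiralA (α t) / 2) t := by
    intro t ht
    have := ((hℓd t ht).add ((hαd t ht).div_const 2)).sub_const (2*ω)
    simpa [hgdef] using this
  have hcα : ∀ σ ∈ Set.Icc (0:ℝ) t0, ContinuousAt α σ := fun σ hσ =>
    (hαd σ (hIco σ hσ)).continuousAt
  have hcℓ : ∀ σ ∈ Set.Icc (0:ℝ) t0, ContinuousAt ℓ σ := fun σ hσ =>
    (hℓd σ (hIco σ hσ)).continuousAt
  have hcg : ∀ σ ∈ Set.Icc (0:ℝ) t0, ContinuousAt g σ := fun σ hσ =>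
    (hgd σ (hIco σ hσ)).continuousAt
  have hpre : ∀ σ, 0 ≤ σ → σ < t0 → 0 < g σ ∧ 0 < α σ ∧ 0 < ℓ σ := by
    intro σ h1 h2
    have hσB : σ ∉ B := fun hm => absurd (csInf_le hBbd hm) (not_le.2 h2)
    have hσIcc : σ ∈ Set.Icc 0 τ1 := ⟨h1, le_trans h2.le ht0_mem_Icc.2⟩
    rcases le_or_gt (g σ) 0 with h' | h'
    · exact absurd ⟨hσIcc, Or.inl h'⟩ hσB
    rcases le_or_gt (α σ) 0 with h'' | h''
    · exact absurd ⟨hσIcc, Or.inr (Or.inl h'')⟩ hσB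
    rcases le_or_gt (ℓ σ) 0 with h''' | h'''
    · exact absurd ⟨hσIcc, Or.inr (Or.inr h''')⟩ hσB
    exact ⟨h', h'', h'''⟩
  have ht0B : t0 ∈ B := by
    by_contra ht0B
    have hpos : 0 < g t0 ∧ 0 < α t0 ∧ 0 < ℓ t0 := by
      have h2 : ¬(g t0 ≤ 0 ∨ α t0 ≤ 0 ∨ ℓ t0 ≤ 0) := fun h => ht0B ⟨ht0_mem_Icc, h⟩
      push_neg at h2
      exact h2
    have hev : ∀ᶠ σ in 𝓝 t0, 0 < g σ ∧ 0 < α σ ∧ 0 < ℓ σ := by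
      have h1 := (hcg t0 ⟨ht0_mem_Icc.1, le_rfl⟩).eventually (eventually_gt_nhds hpos.1)
      have h2 := (hcα t0 ⟨ht0_mem_Icc.1, le_rfl⟩).eventually (eventually_gt_nhds hpos.2.1)
      have h3 := (hcℓ t0 ⟨ht0_mem_Icc.1, le_rfl⟩).eventually (eventually_gt_nhds hpos.2.2)
      filter_upwards [h1, h2, h3] with σ hg hα hℓ
      exact ⟨hg, hα, hℓ⟩
    obtain ⟨ε, hε, hball⟩ := Metric.eventually_nhds_iff.1 hev
    obtain ⟨b, hbB, hblt⟩ := (csInf_lt_iff hBbd hBne).1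
      (show sInf B < t0 + ε by rw [← ht0def]; linarith)
    have hbge : t0 ≤ b := csInf_le hBbd hbB
    have : dist b t0 < ε := by
      rw [Real.dist_eq, abs_lt]
      constructor <;> linarith
    have hposb := hball this
    rcases hbB.2 with h | h | h <;> linarith [hposb.1, hposb.2.1, hposb.2.2]
  have ht0pos : 0 < t0 := by
    rcases eq_or_lt_of_le ht0_mem_Icc.1 with h | h
    · exfalso
      rcases ht0B.2 with h' | h' | h' <;> rw [← h] at h' <;>
        linarith [hinit'.1, hinit'.2.1, hinit'.2.2]
    · exact h
  have hg0 : 0 ≤ g t0 := left_limit_nonneg ht0pos (hcg t0 ⟨ht0pos.le, le_rfl⟩)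
    (fun σ hσ => (hpre σ hσ.1 hσ.2).1)
  have hα0 : 0 ≤ α t0 := left_limit_nonneg ht0pos (hcα t0 ⟨ht0pos.le, le_rfl⟩)
    (fun σ hσ => (hpre σ hσ.1 hσ.2).2.1)
  have hℓ0 : 0 ≤ ℓ t0 := left_limit_nonneg ht0pos (hcℓ t0 ⟨ht0pos.le, le_rfl⟩)
    (fun σ hσ => (hpre σ hσ.1 hσ.2).2.2)
  have hgt0 : g t0 = ℓ t0 + α t0 / 2 - 2*ω := by rw [hgdef]
  have hαpos : 0 < α t0 := by
    rcases eq_or_lt_of_le hα0 with h | h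
    · exact (alpha_ne_zero α t0 ht0pos (fun σ hσ => hαd σ (hIco σ hσ))
        (fun σ hσ => (hpre σ hσ.1 hσ.2).2.1) h.symm).elim
    · exact h
  have hℓpos : 0 < ℓ t0 := by
    rcases eq_or_lt_of_le hℓ0 with h | h
    · exfalso
      have hℓz : ℓ t0 = 0 := h.symm
      have h4 : 4*ω ≤ α t0 := by rw [hgt0, hℓz] at hg0; linarith
      have hdl := hℓd t0 (hIco t0 ⟨ht0pos.le, le_rfl⟩)
      have hle := deriv_nonpos_of_left_pos ht0pos hdl hℓz
        (fun σ hσ => (hpre σ hσ.1 hσ.2).2.2)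
      rw [hℓz] at hle
      linarith [key_axis ω (α t0) hω h4]
    · exact h
  have hgz : g t0 = 0 := by
    rcases ht0B.2 with h | h | h
    · exact le_antisymm h hg0
    · linarith
    · linarith
  have hdg := hgd t0 (hIco t0 ⟨ht0pos.le, le_rfl⟩)
  have hle := deriv_nonpos_of_left_pos ht0pos hdg hgz
    (fun σ hσ => (hpre σ hσ.1 hσ.2).1)
  have hkey := key_line ω (α t0) (ℓ t0) hω hω' hαpos hℓpos (by rw [hgt0] at hgz; exact hgz)
  linarith
end
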